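/- Let δ := ω·(α - σ(α)), let π be a unit of R, and suppose u₀ ∈ K satisfies algebraMap K R (u₀) · (π·σ(π)) = δ·σ(δ). Then the following identity holds in the formal power series ring K[[x]]: (Σ_{p≥0} ε(δ^p · π · (π⁻¹)^p)·x^p) · (1 - ε(π)·u₀·x + u₀·x²) = ε(π) + (2 - ε(π)²·u₀)·x, where π⁻¹ denotes the inverse of the unit π and δ^p · π · (π⁻¹)^p represents δ^p·π^{1-p}. -/

import Mathlib

/-!
Put `t = δ π⁻¹` and `t' = σ(δ) σ(π)⁻¹`. The hypothesis on `u₀` says `t t' = u₀`. Every `z` satisfies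
`z - σ z = ε(ω z) (α - σ α)` (write `z = a + b α`), and `σ` negates `α - σ α`; applied to
`z = ω⁻¹ π` this gives `δ σ(π) + σ(δ) π = ε(π) δ σ(δ)`, i.e. `t + t' = ε(π) u₀`. Hence
`t² - ε(π) u₀ t + u₀ = 0`, so the coefficients `ε(π tⁿ)` satisfy the linear recurrence with this
characteristic polynomial, and the product with `1 - ε(π) u₀ x + u₀ x²` collapses to its first two
terms `ε(π)` and `ε(δ) - ε(π)² u₀ = 2 - ε(π)² u₀`.
-/

open Polynomial TensorProduct

noncomputable section

variable {K : Type*} [CommRing K]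

abbrev Quad (s p : K) : Type _ := AdjoinRoot (X ^ 2 - C s * X + C p)

def qα (s p : K) : Quad s p := AdjoinRoot.root _

lemma quad_aeval_root (s p : K) :
    (aeval (qα s p)) (X ^ 2 - C s * X + C p) = 0 := by
  simp [qα, AdjoinRoot.aeval_eq, AdjoinRoot.mk_self]

def qσ (s p : K) : Quad s p →ₐ[K] Quad s p :=
  AdjoinRoot.liftAlgHom _ (Algebra.ofId K (Quad s p)) (algebraMap K (Quad s p) s - qα s p) (by
    change (aeval (algebraMap K (Quad s p) s - qα s p)) (X ^ 2 - C s * X + C p) = 0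
    have h := quad_aeval_root s p
    simp only [map_add, map_sub, map_mul, map_pow, aeval_X, aeval_C] at h ⊢
    linear_combination h)

theorem qσ_qα (s p : K) : qσ s p (qα s p) = algebraMap K (Quad s p) s - qα s p := by
  simp [qσ, qα, AdjoinRoot.liftAlgHom_root]

theorem qσ_qα_sub_qσ_qα (s p : K) :
    qσ s p (qα s p - qσ s p (qα s p)) = -(qα s p - qσ s p (qα s p)) := by
  simp only [map_sub, qσ_qα, AlgHom.commutes]
  ring

theorem Quad.exists_eq_algebraMap_add_mul_qα (s p : K) (z : Quad s p) :
    ∃ a b : K, z = algebraMap K (Quad s p) a + algebraMap K (Quad s p) b * qα s p := by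
  cases subsingleton_or_nontrivial K
  · have := Module.subsingleton K (Quad s p)
    exact ⟨0, 0, Subsingleton.elim _ _⟩
  have hmonic : (X ^ 2 - C s * X + C p : K[X]).Monic := by monicity!
  have hdeg2 : (X ^ 2 - C s * X + C p : K[X]).natDegree = 2 := by compute_degree!
  set g : K[X] := X ^ 2 - C s * X + C p
  obtain ⟨q, rfl⟩ := AdjoinRoot.mk_surjective z
  have hdeg : (q %ₘ g).natDegree ≤ 1 := by
    have := natDegree_modByMonic_lt q hmonic (by rintro h; simp [h] at hdeg2)
    omega
  refine ⟨(q %ₘ g).coeff 0, (q %ₘ g).coeff 1, ?_⟩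
  rw [← AdjoinRoot.mk_leftInverse hmonic (AdjoinRoot.mk g q), AdjoinRoot.modByMonicHom_mk,
    eq_X_add_C_of_natDegree_le_one hdeg]
  simp [qα, g, add_comm]

theorem sub_qσ_eq_algebraMap_ε_mul {s p : K} {ω : Quad s p} {ε : Quad s p →ₗ[K] K}
    (hω : ε ω = 0) (hωα : ε (ω * qα s p) = 1) (z : Quad s p) :
    z - qσ s p z = algebraMap K (Quad s p) (ε (ω * z)) * (qα s p - qσ s p (qα s p)) := by
  obtain ⟨a, b, rfl⟩ := Quad.exists_eq_algebraMap_add_mul_qα s p z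
  have hεz : ε (ω * (algebraMap K (Quad s p) a + algebraMap K (Quad s p) b * qα s p)) = b := by
    rw [show ω * (algebraMap K (Quad s p) a + algebraMap K (Quad s p) b * qα s p)
        = a • ω + b • (ω * qα s p) by simp only [Algebra.smul_def]; ring]
    simp [hω, hωα]
  rw [hεz]
  simp only [map_add, map_mul, AlgHom.commutes]
  ring

theorem mul_qσ_add_qσ_mul_eq {s p : K} (ω : (Quad s p)ˣ) {ε : Quad s p →ₗ[K] K}
    (hω : ε ω = 0) (hωα : ε (ω * qα s p) = 1) (π : Quad s p) :
    ω * (qα s p - qσ s p (qα s p)) * qσ s p π + qσ s p (ω * (qα s p - qσ s p (qα s p))) * π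
      = algebraMap K (Quad s p) (ε π) * (ω * (qα s p - qσ s p (qα s p)) *
          qσ s p (ω * (qα s p - qσ s p (qα s p)))) := by
  obtain ⟨z, rfl⟩ : ∃ z, π = ω * z := ⟨↑ω⁻¹ * π, by simp⟩
  have hsub := sub_qσ_eq_algebraMap_ε_mul hω hωα z
  rw [map_mul, map_mul, qσ_qα_sub_qσ_qα]
  linear_combination (-(ω * qσ s p ω * (qα s p - qσ s p (qα s p)))) * hsub

namespace PowerSeries

theorem mk_mul_one_sub_C_mul_X_add_C_mul_X_sq {R : Type*} [CommRing R]
    (a : ℕ → R) (c u : R) (h : ∀ n, a (n + 2) - c * a (n + 1) + u * a n = 0) :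
    mk a * (1 - C c * X + C u * X ^ 2) = C (a 0) + C (a 1 - c * a 0) * X := by
  have expand : mk a * (1 - C c * X + C u * X ^ 2)
      = mk a - C c * (mk a * X) + C u * (mk a * X ^ 2) := by
    ring
  rw [expand]
  ext n
  rcases n with _ | _ | n
  · simp
  · simp [coeff_mul_X_pow']
  · simp [coeff_mul_X_pow']
    linear_combination h n

end PowerSeries

theorem LinearMap.map_mul_pow_recurrence {R : Type*} [CommRing R] [Algebra K R]
    (ε : R →ₗ[K] K) {t : R} {c u : K}
    (ht : t ^ 2 - algebraMap K R c * t + algebraMap K R u = 0) (z : R) (n : ℕ) :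
    ε (z * t ^ (n + 2)) - c * ε (z * t ^ (n + 1)) + u * ε (z * t ^ n) = 0 := by
  have hz : z * t ^ (n + 2) - c • (z * t ^ (n + 1)) + u • (z * t ^ n) = 0 := by
    rw [Algebra.smul_def, Algebra.smul_def]
    linear_combination (z * t ^ n) * ht
  simpa using congrArg ε hz

theorem mul_inv_sq_sub_add_eq_zero {R : Type*} [CommRing R] (π π' : Rˣ) {δ δ' u y : R}
    (hnorm : u * (π * π') = δ * δ') (htrace : δ * π' + δ' * π = y * (δ * δ')) :
    (δ * ↑π⁻¹) ^ 2 - y * u * (δ * ↑π⁻¹) + u = 0 := by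
  have hprod : (δ * ↑π⁻¹) * (δ' * ↑π'⁻¹) = u := by
    linear_combination (-(↑π⁻¹ * ↑π'⁻¹ : R)) * hnorm + u * π.mul_inv + u * π * ↑π⁻¹ * π'.mul_inv
  have hsum : δ * ↑π⁻¹ + δ' * ↑π'⁻¹ = y * u := by
    linear_combination (↑π⁻¹ * ↑π'⁻¹ : R) * htrace + y * hprod - δ * ↑π⁻¹ * π'.mul_inv
      - δ' * ↑π'⁻¹ * π.mul_inv
  linear_combination (δ * ↑π⁻¹) * hsum - hprod

/-- With `δ = ω·(α - σ α)`, a unit `π` of `R`, and `u₀ ∈ K` with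
`u₀·π·σ(π) = δ·σ(δ)`, the power series identity
`(Σ_p ε(δ^p·π^{1-p}) x^p)·(1 - ε(π)·u₀·x + u₀·x²) = ε(π) + (2 - ε(π)²·u₀)·x`
holds in `K[[x]]`. -/
theorem stmt9 (s p : K) (ω : (Quad s p)ˣ) (ε : Quad s p →ₗ[K] K)
    (hω : ε (ω : Quad s p) = 0) (hωα : ε ((ω : Quad s p) * qα s p) = 1)
    (π : (Quad s p)ˣ) (u₀ : K)
    (hu₀ : algebraMap K (Quad s p) u₀ * ((π : Quad s p) * qσ s p (π : Quad s p))
      = (ω : Quad s p) * (qα s p - qσ s p (qα s p)) *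
          qσ s p ((ω : Quad s p) * (qα s p - qσ s p (qα s p)))) :
    (PowerSeries.mk fun n : ℕ =>
        ε (((ω : Quad s p) * (qα s p - qσ s p (qα s p))) ^ n
            * (π : Quad s p) * ((π⁻¹ : (Quad s p)ˣ) : Quad s p) ^ n)) *
      (1 - PowerSeries.C (R := K) (ε (π : Quad s p) * u₀) * PowerSeries.X
         + PowerSeries.C (R := K) u₀ * PowerSeries.X ^ 2)
    = PowerSeries.C (R := K) (ε (π : Quad s p))
        + PowerSeries.C (R := K) (2 - (ε (π : Quad s p)) ^ 2 * u₀) * PowerSeries.X := by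
  set δ := (ω : Quad s p) * (qα s p - qσ s p (qα s p)) with hδ
  have hroot : (δ * ↑π⁻¹) ^ 2 - algebraMap K (Quad s p) (ε π * u₀) * (δ * ↑π⁻¹)
      + algebraMap K (Quad s p) u₀ = 0 := by
    rw [map_mul]
    exact mul_inv_sq_sub_add_eq_zero π (Units.map (qσ s p : Quad s p →* Quad s p) π) hu₀
      (mul_qσ_add_qσ_mul_eq ω hω hωα π)
  have hεδ : ε δ = 2 := by
    rw [hδ, qσ_qα, show (ω : Quad s p) * (qα s p - (algebraMap K (Quad s p) s - qα s p))
        = (2 : K) • (ω * qα s p) - s • (ω : Quad s p) by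
      simp only [Algebra.smul_def, map_ofNat]; ring]
    simp [hω, hωα]
  have hcoeff : (fun n : ℕ => ε (δ ^ n * π * ↑π⁻¹ ^ n)) = fun n => ε (π * (δ * ↑π⁻¹) ^ n) := by
    funext n
    ring_nf
  rw [hcoeff, PowerSeries.mk_mul_one_sub_C_mul_X_add_C_mul_X_sq _ _ _
    (fun n => ε.map_mul_pow_recurrence hroot π n)]
  simp only [pow_zero, mul_one, pow_one, mul_left_comm (π : Quad s p), π.mul_inv, hεδ]
  simp only [map_sub, map_mul, map_pow]
  ring

end
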